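/- arXiv:1001.3424 — 2 statements merged into one kernel-verified Lean document; each statement's English description precedes it below -/
import Mathlib

section
/- Let G be a group, H a normal subgroup of G, k a field, and W a finite-dimensional k-vector space with a linear representation ρ : G → GL(W). If W is semisimple as a G-module, then W is semisimple as an H-module (via restriction of ρ). -/
/-!
When `H` is normal, `ρ g` carries `H`-subrepresentations to `H`-subrepresentations (because
`g⁻¹ H g = H`), so it permutes the simple ones and the `H`-socle is `G`-stable. A `G`-stable
complement of the socle is then an `H`-subrepresentation meeting it trivially; by
finite-dimensionality it would contain a simple `H`-subrepresentation, which lies in the socle,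
so the complement is zero and `W` is the sum of its simple `H`-subrepresentations.
-/

open scoped MonoidAlgebra

namespace Submodule

variable (R M : Type*) [Ring R] [AddCommGroup M] [Module R M]

def socle : Submodule R M := sSup {m | IsSimpleModule R m}

variable {R M}

theorem socle_eq_sSup_atoms : socle R M = sSup {m | IsAtom m} := by
  simp_rw [socle, isSimpleModule_iff_isAtom]

theorem le_socle_of_isAtom {m : Submodule R M} (hm : IsAtom m) : m ≤ socle R M := by
  rw [socle_eq_sSup_atoms]
  exact le_sSup hm

theorem _root_.OrderIso.apply_socle {S N : Type*} [Ring S] [AddCommGroup N] [Module S N]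
    (e : Submodule R M ≃o Submodule S N) : e (socle R M) = socle S N := by
  simp_rw [socle_eq_sSup_atoms, e.map_sSup_eq_sSup_symm_preimage]
  congr 1
  ext m
  exact e.symm.isAtom_iff m

end Submodule

namespace Subrepresentation

variable {k G K W : Type*} [CommRing k] [AddCommGroup W] [Module k W]

section Restrict

variable [Monoid G] [Monoid K] {ρ : Representation k G W} (f : K →* G)

def restrict (p : Subrepresentation ρ) : Subrepresentation (ρ.comp f) :=
  ⟨p.toSubmodule, fun h _ hv => p.apply_mem_toSubmodule (f h) hv⟩

@[simp]
theorem mem_restrict {p : Subrepresentation ρ} {v : W} : v ∈ p.restrict f ↔ v ∈ p := Iff.rfl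

theorem restrict_injective : Function.Injective (restrict (ρ := ρ) f) :=
  fun _ _ h => SetLike.ext fun v => by simpa using SetLike.ext_iff.1 h v

@[simp]
theorem restrict_bot : (⊥ : Subrepresentation ρ).restrict f = ⊥ := rfl

@[simp]
theorem restrict_inf (p q : Subrepresentation ρ) :
    (p ⊓ q).restrict f = p.restrict f ⊓ q.restrict f := rfl

end Restrict

section Translate

variable [Group G] {ρ : Representation k G W} {H : Subgroup G} [hH : H.Normal]

/-- The image of `p` under `ρ g`, written as a preimage under `ρ g⁻¹`. -/
def translate (g : G) (p : Subrepresentation (ρ.comp H.subtype)) :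
    Subrepresentation (ρ.comp H.subtype) where
  toSubmodule := p.toSubmodule.comap (ρ g⁻¹)
  apply_mem_toSubmodule h v hv := by
    have := p.apply_mem_toSubmodule ⟨g⁻¹ * h * g, by simpa using hH.conj_mem _ h.2 g⁻¹⟩ hv
    simpa [← Module.End.mul_apply, ← map_mul, mul_assoc] using this

theorem mem_translate {g : G} {p : Subrepresentation (ρ.comp H.subtype)} {v : W} :
    v ∈ translate g p ↔ ρ g⁻¹ v ∈ p := Iff.rfl

def translateOrderIso (g : G) :
    Subrepresentation (ρ.comp H.subtype) ≃o Subrepresentation (ρ.comp H.subtype) where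
  toFun := translate g
  invFun := translate g⁻¹
  left_inv p := SetLike.ext fun v => by simp [mem_translate]
  right_inv p := SetLike.ext fun v => by simp [mem_translate]
  map_rel_iff' :=
    ⟨fun h v hv => by simpa [mem_translate] using h (x := ρ g v) (by simpa [mem_translate]),
      fun h _ hv => h hv⟩

end Translate

instance [Monoid G] {ρ : Representation k G W} [IsArtinian k W] :
    WellFoundedLT (Subrepresentation ρ) :=
  (show StrictMono (toSubmodule (ρ := ρ)) from fun _ _ h => h).wellFoundedLT

end Subrepresentation

namespace Representation

open Subrepresentation

section Socle

variable {k G W : Type*} [CommRing k] [Monoid G] [AddCommGroup W] [Module k W]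
  (ρ : Representation k G W)

noncomputable def socle : Subrepresentation ρ := ofSubmodule' (Submodule.socle k[G] ρ.asModule)

variable {ρ}

theorem le_socle_of_isAtom {p : Subrepresentation ρ} (hp : IsAtom p) : p ≤ socle ρ :=
  subrepresentationSubmoduleOrderIso.le_symm_apply.2
    (Submodule.le_socle_of_isAtom ((OrderIso.isAtom_iff _ p).2 hp))

theorem socle_eq_top_iff : socle ρ = ⊤ ↔ Submodule.socle k[G] ρ.asModule = ⊤ :=
  map_eq_top_iff subrepresentationSubmoduleOrderIso.symm

theorem orderIso_apply_socle (e : Subrepresentation ρ ≃o Subrepresentation ρ) :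
    e (socle ρ) = socle ρ :=
  subrepresentationSubmoduleOrderIso.eq_symm_apply.2 <|
    (subrepresentationSubmoduleOrderIso.symm.trans
      (e.trans subrepresentationSubmoduleOrderIso)).apply_socle

end Socle

theorem apply_mem_socle_comp_subtype {k G W : Type*} [CommRing k] [Group G] [AddCommGroup W]
    [Module k W] (ρ : Representation k G W) {H : Subgroup G} [H.Normal] (g : G) {v : W}
    (hv : v ∈ socle (ρ.comp H.subtype)) : ρ g v ∈ socle (ρ.comp H.subtype) := by
  rw [← orderIso_apply_socle (translateOrderIso g)]
  simpa [translateOrderIso, mem_translate] using hv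

theorem eq_top_of_socle_le_restrict {k G K W : Type*} [Field k] [Monoid G] [Monoid K]
    [AddCommGroup W] [Module k W] [IsArtinian k W] {ρ : Representation k G W}
    [IsSemisimpleRepresentation ρ] (f : K →* G) {T : Subrepresentation ρ}
    (hT : socle (ρ.comp f) ≤ T.restrict f) : T = ⊤ := by
  obtain ⟨C, hC⟩ := exists_isCompl T
  suffices C = ⊥ by simpa [this] using hC.sup_eq_top
  refine restrict_injective f (by_contra fun hne => ?_)
  obtain ⟨q, hq, hqC⟩ := (eq_bot_or_exists_atom_le (C.restrict f)).resolve_left hne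
  have : q ≤ (T ⊓ C).restrict f :=
    restrict_inf f T C ▸ le_inf ((le_socle_of_isAtom hq).trans hT) hqC
  rw [hC.inf_eq_bot, restrict_bot] at this
  exact hq.1 (le_bot_iff.1 this)

end Representation

/-- Clifford's lemma: if `W` is a semisimple representation of `G` over a field `k`
(finite-dimensional), and `H` is a normal subgroup of `G`, then `W` is semisimple
as a representation of `H` (via restriction). -/
theorem clifford_semisimple_restriction
    (k : Type*) [Field k] (G : Type*) [Group G] (H : Subgroup G) [H.Normal]
    (W : Type*) [AddCommGroup W] [Module k W] [FiniteDimensional k W]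
    (ρ : Representation k G W)
    (hss : IsSemisimpleModule (MonoidAlgebra k G) ρ.asModule) :
    IsSemisimpleModule (MonoidAlgebra k H) (Representation.asModule (V := W) (ρ.comp H.subtype : Representation k H W)) := by
  rw [← Representation.isSemisimpleRepresentation_iff_isSemisimpleModule_asModule] at hss
  let S : Subrepresentation ρ :=
    ⟨(Representation.socle (ρ.comp H.subtype)).toSubmodule,
      fun g _ => Representation.apply_mem_socle_comp_subtype ρ g⟩
  have hS : S = ⊤ := Representation.eq_top_of_socle_le_restrict H.subtype le_rfl
  exact .of_sSup_simples_eq_top <|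
    Representation.socle_eq_top_iff.1 (congrArg (Subrepresentation.restrict H.subtype) hS)
end

section
/- Let G be a group, H ⊴ G a normal subgroup, k a field, and W a finite-dimensional k[G]-module that is simple. Then W, viewed as a k[H]-module by restriction, is semisimple. -/
/-!
Let `S` be the sum of all simple `k[H]`-submodules of `W`; it is nonzero because `W` is
finite-dimensional. Since `H` is normal, each `ρ g` maps `H`-stable subspaces to `H`-stable
subspaces, so it induces an automorphism of the lattice of `k[H]`-submodules, which must permute
the atoms and hence fix `S`. Thus `S` is a nonzero `G`-stable subspace, so `S = W`, and a module
that is a sum of simple submodules is semisimple.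
-/

open scoped MonoidAlgebra

theorem OrderIso.map_sSup_setOf_isAtom {α β : Type*} [CompleteLattice α] [CompleteLattice β]
    (e : α ≃o β) : e (sSup {a | IsAtom a}) = sSup {b | IsAtom b} := by
  rw [e.map_sSup_eq_sSup_symm_preimage]
  congr 1
  ext b
  exact e.symm.isAtom_iff b

theorem sSup_setOf_isAtom_ne_bot {α : Type*} [CompleteLattice α] [Nontrivial α] [IsAtomic α] :
    sSup {a : α | IsAtom a} ≠ ⊥ := by
  obtain ⟨_, ha⟩ := IsAtomic.exists_atom (α := α)
  exact ne_bot_of_le_ne_bot ha.1 (le_sSup ha)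

namespace Subrepresentation

variable {k G W : Type*} [CommSemiring k] [Group G] [AddCommMonoid W] [Module k W]
  (ρ : Representation k G W) (H : Subgroup G) [H.Normal]

def conj (g : G) (σ : Subrepresentation (ρ.comp H.subtype)) :
    Subrepresentation (ρ.comp H.subtype) where
  toSubmodule := σ.toSubmodule.map (ρ g)
  apply_mem_toSubmodule h := by
    rintro _ ⟨v, hv, rfl⟩
    refine ⟨ρ (g⁻¹ * h * g) v, σ.apply_mem_toSubmodule ⟨g⁻¹ * h * g, ?_⟩ hv, ?_⟩
    · simpa using ‹H.Normal›.conj_mem h h.2 g⁻¹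
    · simp [← Module.End.mul_apply, ← map_mul, mul_assoc]

theorem conj_mul (a b : G) (σ : Subrepresentation (ρ.comp H.subtype)) :
    conj ρ H (a * b) σ = conj ρ H a (conj ρ H b σ) := by
  ext1
  simp [conj, map_mul, Module.End.mul_eq_comp, Submodule.map_comp]

theorem conj_one (σ : Subrepresentation (ρ.comp H.subtype)) : conj ρ H 1 σ = σ := by
  ext1
  simp [conj, Module.End.one_eq_id]

theorem conj_mono (g : G) : Monotone (conj ρ H g) :=
  fun _ _ h => Submodule.map_mono h

def conjOrderIso (g : G) :
    Subrepresentation (ρ.comp H.subtype) ≃o Subrepresentation (ρ.comp H.subtype) where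
  toFun := conj ρ H g
  invFun := conj ρ H g⁻¹
  left_inv σ := by rw [← conj_mul, inv_mul_cancel, conj_one]
  right_inv σ := by rw [← conj_mul, mul_inv_cancel, conj_one]
  map_rel_iff' {σ τ} := by
    refine ⟨fun h => ?_, fun h => conj_mono ρ H g h⟩
    simpa only [Equiv.coe_fn_mk, ← conj_mul, inv_mul_cancel, conj_one] using conj_mono ρ H g⁻¹ h

end Subrepresentation

namespace Representation

section Normal

variable {k G W : Type*} [CommSemiring k] [Group G] [AddCommMonoid W] [Module k W]
  (ρ : Representation k G W) (H : Subgroup G) [H.Normal]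

theorem apply_mem_sSup_atoms_of_normal (g : G) {v : W}
    (hv : v ∈ sSup {N : Submodule k[H] (asModule (ρ.comp H.subtype)) | IsAtom N}) :
    ρ g v ∈ sSup {N : Submodule k[H] (asModule (ρ.comp H.subtype)) | IsAtom N} := by
  let e := Subrepresentation.subrepresentationSubmoduleOrderIso.symm.trans
    ((Subrepresentation.conjOrderIso ρ H g).trans
      Subrepresentation.subrepresentationSubmoduleOrderIso)
  rw [← e.map_sSup_setOf_isAtom]
  exact ⟨v, hv, rfl⟩

end Normal

variable {k G W : Type*} [CommRing k] [Group G] [AddCommGroup W] [Module k W]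
  (ρ : Representation k G W) (H : Subgroup G)

theorem eq_bot_or_eq_top_of_forall_apply_mem [IsSimpleModule k[G] ρ.asModule]
    (N : Submodule k[H] (asModule (ρ.comp H.subtype))) (hN : ∀ g {v}, v ∈ N → ρ g v ∈ N) :
    N = ⊥ ∨ N = ⊤ := by
  let σ : Subrepresentation ρ := ⟨(Subrepresentation.ofSubmodule' N).toSubmodule, hN⟩
  rcases eq_bot_or_eq_top σ.asSubmodule with h | h
  · exact .inl ((Submodule.eq_bot_iff N).2 fun v hv => (Submodule.eq_bot_iff _).1 h v hv)
  · exact .inr (Submodule.eq_top_iff'.2 fun v => Submodule.eq_top_iff'.1 h v)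

end Representation

/-- Clifford's theorem: if `W` is a simple (irreducible) finite-dimensional
representation of `G` over a field `k`, and `H` is a normal subgroup of `G`,
then `W` is semisimple as a representation of `H` (via restriction). -/
theorem clifford_simple_restriction_semisimple
    (k : Type*) [Field k] (G : Type*) [Group G] (H : Subgroup G) [H.Normal]
    (W : Type*) [AddCommGroup W] [Module k W] [FiniteDimensional k W]
    (ρ : Representation k G W)
    (hsimple : IsSimpleModule (MonoidAlgebra k G) ρ.asModule) :
    IsSemisimpleModule (MonoidAlgebra k H) (Representation.asModule (V := W) (ρ.comp H.subtype : Representation k H W)) := by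
  let S := sSup {N : Submodule k[H] (Representation.asModule (ρ.comp H.subtype)) | IsAtom N}
  have : IsArtinian k[H] (Representation.asModule (ρ.comp H.subtype)) :=
    isArtinian_of_tower k inferInstance
  have : Nontrivial (Representation.asModule (ρ.comp H.subtype)) := hsimple.nontrivial
  have hS : S ≠ ⊥ := sSup_setOf_isAtom_ne_bot
  have hS_top : S = ⊤ := (ρ.eq_bot_or_eq_top_of_forall_apply_mem H S
    fun g _ => ρ.apply_mem_sSup_atoms_of_normal H g).resolve_left hS
  refine .of_sSup_simples_eq_top ?_
  simpa only [isSimpleModule_iff_isAtom] using hS_top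
end
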